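/- Let H be a Hilbert space, K a compact operator with KK*ψ_j = λ_jψ_j, ψ_j = Kφ_j, K*Kφ_j = λ_jφ_j, λ₁ ≥ λ₂ ≥ ... ≥ 0. Suppose (X_p) is a family of n-dimensional subspaces with orthogonal projections P_p such that ‖(I−P_p)(KK*)^i‖ ≤ λ_{n+1}^i when p = 2i−1 and ‖(I−P_p)(KK*)^iK‖ ≤ λ_{n+1}^{i+1/2} when p = 2i. If λ_l > λ_{n+1} for some l ≤ n, then for each j = 1, ..., l, ‖ψ_j − P_pψ_j‖/‖ψ_j‖ ≤ (λ_{n+1}/λ_j)^{⌈(p+1)/2⌉ − 1/2·(p mod 2 = 1 ? 0 : −1)} and in particular ‖ψ_j − P_pψ_j‖/‖ψ_j‖ → 0 as p → ∞. -/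

import Mathlib

/-!
Since `K*K φ_j = λ_j φ_j`, the operator `(KK*)^i` maps `ψ_j = K φ_j` to `λ_j^i ψ_j`, and
`(KK*)^i K` maps `φ_j` to `λ_j^i ψ_j`. Evaluating the operator-norm hypotheses at `ψ_j`, resp. at
the unit vector `φ_j`, and dividing by `λ_j^i` bounds `‖ψ_j − P_p ψ_j‖`; with `‖ψ_j‖² = λ_j` both
bounds become `(λ_{n+1}/λ_j)^{(p+1)/2} ‖ψ_j‖`, which tends to `0` because
`λ_j > λ_{n+1} = ‖K φ_{n+1}‖² ≥ 0`.
-/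

open ContinuousLinearMap Filter

/-- The orthogonal projection onto a submodule, as an operator on the ambient space. -/
noncomputable def proj {H : Type*} [NormedAddCommGroup H] [InnerProductSpace ℝ H]
    (Z : Submodule ℝ H) [Submodule.HasOrthogonalProjection Z] : H →L[ℝ] H :=
  Z.subtypeL.comp (Submodule.orthogonalProjectionOnto Z)

lemma Real.sqrt_pow_div_pow (a : ℝ) {c : ℝ} (hc : 0 < c) (i : ℕ) :
    √(a ^ (2 * i + 1)) / c ^ i = √((a / c) ^ (2 * i + 1)) * √c := by
  rw [← Real.sqrt_mul' _ hc.le,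
    show (a / c) ^ (2 * i + 1) * c = a ^ (2 * i + 1) / (c ^ i) ^ 2 by
      rw [div_pow, ← pow_mul, mul_comm i 2, pow_succ c]; field_simp,
    Real.sqrt_div' _ (by positivity), Real.sqrt_sq (by positivity)]

lemma le_sqrt_pow_succ_of_odd_of_even {u : ℕ → ℝ} {r C : ℝ} (hr : 0 ≤ r)
    (hodd : ∀ i, 1 ≤ i → u (2 * i - 1) ≤ r ^ i * C)
    (heven : ∀ i, u (2 * i) ≤ √(r ^ (2 * i + 1)) * C) (p : ℕ) :
    u p ≤ √r ^ (p + 1) * C := by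
  have hsqrt_pow : ∀ k, √(r ^ k) = √r ^ k := fun k => by
    conv_lhs => rw [← Real.sq_sqrt hr, ← pow_mul, mul_comm, pow_mul]
    exact Real.sqrt_sq (by positivity)
  obtain ⟨i, rfl | rfl⟩ := Nat.even_or_odd' p
  · simpa only [hsqrt_pow] using heven i
  · rw [show 2 * i + 1 + 1 = 2 * (i + 1) by ring, pow_mul, Real.sq_sqrt hr]
    simpa only [show 2 * (i + 1) - 1 = 2 * i + 1 by omega] using hodd (i + 1) (by omega)

lemma tendsto_div_zero_of_odd_of_even {u : ℕ → ℝ} {r C : ℝ} (hu : ∀ p, 0 ≤ u p)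
    (hr : 0 ≤ r) (hr1 : r < 1) (hC : 0 < C)
    (hodd : ∀ i, 1 ≤ i → u (2 * i - 1) ≤ r ^ i * C)
    (heven : ∀ i, u (2 * i) ≤ √(r ^ (2 * i + 1)) * C) :
    Tendsto (fun p => u p / C) atTop (nhds 0) := by
  have hsqrt_lt_one : √r < 1 := (Real.sqrt_lt' one_pos).2 (by rwa [one_pow])
  refine squeeze_zero (fun p => div_nonneg (hu p) hC.le)
    (fun p => (div_le_iff₀ hC).2 (le_sqrt_pow_succ_of_odd_of_even hr hodd heven p)) ?_
  exact (tendsto_pow_atTop_nhds_zero_of_lt_one (Real.sqrt_nonneg r) hsqrt_lt_one).comp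
    (tendsto_add_atTop_nat 1)

section Operators

variable {E F : Type*} [NormedAddCommGroup E] [NormedSpace ℝ E]
  [NormedAddCommGroup F] [NormedSpace ℝ F]

lemma norm_sub_apply_le_of_apply_eq_smul {P : F →L[ℝ] F} {S : E →L[ℝ] F} {x : E} {y : F}
    {b c : ℝ} (hc : 0 < c) (hS : S x = c • y) (hb : ‖(1 - P).comp S‖ ≤ b) :
    ‖y - P y‖ ≤ b / c * ‖x‖ := by
  have : c * ‖y - P y‖ ≤ b * ‖x‖ :=
    calc c * ‖y - P y‖ = ‖((1 - P).comp S) x‖ := by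
          rw [comp_apply, hS, map_smul, norm_smul, Real.norm_of_nonneg hc.le]; rfl
      _ ≤ b * ‖x‖ := (le_opNorm _ x).trans (by gcongr)
  rw [div_mul_eq_mul_div, le_div_iff₀ hc]
  linarith

end Operators

section Adjoint

variable {E F : Type*} [NormedAddCommGroup E] [InnerProductSpace ℝ E] [CompleteSpace E]
  [NormedAddCommGroup F] [InnerProductSpace ℝ F] [CompleteSpace F]

lemma norm_apply_sq_of_adjoint_apply_eq_smul (K : E →L[ℝ] F) {x : E} {c : ℝ}
    (h : adjoint K (K x) = c • x) : ‖K x‖ ^ 2 = c * ‖x‖ ^ 2 := by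
  rw [← real_inner_self_eq_norm_sq, ← adjoint_inner_left, h, real_inner_smul_left,
    real_inner_self_eq_norm_sq]

lemma comp_adjoint_pow_apply_of_adjoint_apply_eq_smul (K : E →L[ℝ] F) {x : E} {c : ℝ}
    (h : adjoint K (K x) = c • x) (i : ℕ) :
    ((K.comp (adjoint K)) ^ i) (K x) = c ^ i • K x := by
  induction i with
  | zero => simp
  | succ i ih =>
    rw [pow_succ', mul_apply_eq_comp, ih, map_smul, comp_apply, h, map_smul, smul_smul, pow_succ]

end Adjoint

theorem stmt17_general {H : Type*} [NormedAddCommGroup H] [InnerProductSpace ℝ H] [CompleteSpace H]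
    (K : H →L[ℝ] H)
    (lam : ℕ → ℝ) (φ ψ : ℕ → H)
    (hanti : Antitone lam)
    (hON : Orthonormal ℝ (fun j : ℕ => φ (j + 1)))
    (heig : ∀ j, 1 ≤ j → ContinuousLinearMap.adjoint K (K (φ j)) = lam j • φ j)
    (hψ : ∀ j, 1 ≤ j → ψ j = K (φ j))
    (n l : ℕ)
    (X : ℕ → Submodule ℝ H) [∀ p, Submodule.HasOrthogonalProjection (X p)]
    (hodd : ∀ i : ℕ, 1 ≤ i →
      ‖(1 - proj (X (2 * i - 1))).comp ((K.comp (ContinuousLinearMap.adjoint K)) ^ i)‖ ≤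
        lam (n + 1) ^ i)
    (heven : ∀ i : ℕ,
      ‖(1 - proj (X (2 * i))).comp (((K.comp (ContinuousLinearMap.adjoint K)) ^ i).comp K)‖ ≤
        Real.sqrt (lam (n + 1) ^ (2 * i + 1)))
    (hgap : lam (n + 1) < lam l) :
    ∀ j, 1 ≤ j → j ≤ l →
      (∀ i : ℕ, 1 ≤ i →
        ‖ψ j - proj (X (2 * i - 1)) (ψ j)‖ ≤ (lam (n + 1) / lam j) ^ i * ‖ψ j‖) ∧
      (∀ i : ℕ,
        ‖ψ j - proj (X (2 * i)) (ψ j)‖ ≤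
          Real.sqrt ((lam (n + 1) / lam j) ^ (2 * i + 1)) * ‖ψ j‖) ∧
      Filter.Tendsto (fun p : ℕ => ‖ψ j - proj (X p) (ψ j)‖ / ‖ψ j‖)
        Filter.atTop (nhds 0) := by
  intro j hj hjl
  have hφ : ∀ k, 1 ≤ k → ‖φ k‖ = 1 := fun k hk => by
    simpa only [Nat.sub_add_cancel hk] using hON.1 (k - 1)
  have hψ_sq : ∀ k, 1 ≤ k → ‖ψ k‖ ^ 2 = lam k := fun k hk => by
    rw [hψ k hk, norm_apply_sq_of_adjoint_apply_eq_smul K (heig k hk), hφ k hk, one_pow, mul_one]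
  have hlam_nonneg : 0 ≤ lam (n + 1) := hψ_sq (n + 1) (by omega) ▸ sq_nonneg _
  have hlt : lam (n + 1) < lam j := hgap.trans_le (hanti hjl)
  have hpos : 0 < lam j := hlam_nonneg.trans_lt hlt
  have hψ_norm : ‖ψ j‖ = √(lam j) := by rw [← hψ_sq j hj, Real.sqrt_sq (norm_nonneg _)]
  have hTψ : ∀ i, ((K.comp (adjoint K)) ^ i) (ψ j) = lam j ^ i • ψ j := fun i => by
    rw [hψ j hj]; exact comp_adjoint_pow_apply_of_adjoint_apply_eq_smul K (heig j hj) i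
  have hψ_odd : ∀ i, 1 ≤ i →
      ‖ψ j - proj (X (2 * i - 1)) (ψ j)‖ ≤ (lam (n + 1) / lam j) ^ i * ‖ψ j‖ := fun i hi => by
    simpa only [div_pow] using
      norm_sub_apply_le_of_apply_eq_smul (pow_pos hpos i) (hTψ i) (hodd i hi)
  have hψ_even : ∀ i, ‖ψ j - proj (X (2 * i)) (ψ j)‖ ≤
      √((lam (n + 1) / lam j) ^ (2 * i + 1)) * ‖ψ j‖ := fun i => by
    have := norm_sub_apply_le_of_apply_eq_smul (pow_pos hpos i)
      (by rw [comp_apply, ← hψ j hj]; exact hTψ i) (heven i)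
    rwa [hφ j hj, mul_one, Real.sqrt_pow_div_pow _ hpos, ← hψ_norm] at this
  refine ⟨hψ_odd, hψ_even, tendsto_div_zero_of_odd_of_even (fun _ => norm_nonneg _)
    (div_nonneg hlam_nonneg hpos.le) ((div_lt_one hpos).2 hlt)
    (hψ_norm ▸ Real.sqrt_pos.2 hpos) hψ_odd hψ_even⟩

/-- Convergence, as `p → ∞`, of optimal subspaces to eigenfunctions.  `K` is a compact
operator with `K*K (φ j) = lam j • φ j`, `ψ j = K (φ j)`, `KK* (ψ j) = lam j • ψ j`,
`lam` decreasing and nonnegative.  `X p` are `n`-dimensional subspaces whose orthogonal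
projections `P p = proj (X p)` satisfy `‖(I − P (2i−1))(KK*)^i‖ ≤ lam (n+1)^i` and
`‖(I − P (2i))(KK*)^i K‖ ≤ lam (n+1)^{i+1/2}`.  If `lam l > lam (n+1)` for some `l ≤ n`,
then for each `j = 1, …, l` the quantitative bounds
`‖ψ j − P (2i−1) (ψ j)‖ ≤ (lam (n+1)/lam j)^i ‖ψ j‖` and
`‖ψ j − P (2i) (ψ j)‖ ≤ (lam (n+1)/lam j)^{i+1/2} ‖ψ j‖` hold, and in particular
`‖ψ j − P p (ψ j)‖/‖ψ j‖ → 0` as `p → ∞`. -/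
theorem stmt17 {H : Type*} [NormedAddCommGroup H] [InnerProductSpace ℝ H] [CompleteSpace H]
    (K : H →L[ℝ] H) (hK : IsCompactOperator K)
    (lam : ℕ → ℝ) (φ ψ : ℕ → H)
    (hanti : Antitone lam) (hnonneg : ∀ j, 0 ≤ lam j)
    (hON : Orthonormal ℝ (fun j : ℕ => φ (j + 1)))
    (heig : ∀ j, 1 ≤ j → ContinuousLinearMap.adjoint K (K (φ j)) = lam j • φ j)
    (hψ : ∀ j, 1 ≤ j → ψ j = K (φ j))
    (heig' : ∀ j, 1 ≤ j → K (ContinuousLinearMap.adjoint K (ψ j)) = lam j • ψ j)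
    (n l : ℕ) (hl : 1 ≤ l) (hln : l ≤ n)
    (X : ℕ → Submodule ℝ H) [∀ p, Submodule.HasOrthogonalProjection (X p)]
    (hdim : ∀ p, Module.finrank ℝ (X p) = n)
    (hodd : ∀ i : ℕ, 1 ≤ i →
      ‖(1 - proj (X (2 * i - 1))).comp ((K.comp (ContinuousLinearMap.adjoint K)) ^ i)‖ ≤
        lam (n + 1) ^ i)
    (heven : ∀ i : ℕ,
      ‖(1 - proj (X (2 * i))).comp (((K.comp (ContinuousLinearMap.adjoint K)) ^ i).comp K)‖ ≤
        Real.sqrt (lam (n + 1) ^ (2 * i + 1)))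
    (hgap : lam (n + 1) < lam l) :
    ∀ j, 1 ≤ j → j ≤ l →
      (∀ i : ℕ, 1 ≤ i →
        ‖ψ j - proj (X (2 * i - 1)) (ψ j)‖ ≤ (lam (n + 1) / lam j) ^ i * ‖ψ j‖) ∧
      (∀ i : ℕ,
        ‖ψ j - proj (X (2 * i)) (ψ j)‖ ≤
          Real.sqrt ((lam (n + 1) / lam j) ^ (2 * i + 1)) * ‖ψ j‖) ∧
      Filter.Tendsto (fun p : ℕ => ‖ψ j - proj (X p) (ψ j)‖ / ‖ψ j‖)
        Filter.atTop (nhds 0) :=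
  stmt17_general K lam φ ψ hanti hON heig hψ n l X hodd heven hgap
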